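/- arXiv:2310.19696 — 3 statements merged into one kernel-verified Lean document; each statement's English description precedes it below -/
import Mathlib

section
/- For the Zhou–Fan system, the endemic equilibria correspond exactly to the positive roots of the quadratic A i² + B i + C = 0, where A = v_s v_i, B = V_i v_s ω - μ η₀, C = ω μ V_i (1 - R_0), with v_s = β + ξμ, V_i = v_i + η, η₀ = βb/μ - v_i, and R_0 = βb/(μ V_i). More precisely: a pair (s,i) with i > 0 satisfies b - s(μ + βi/(1+ξi)) = 0 and sβ/(1+ξi) - ηω/(ω+i) - v_i = 0 if and only if i > 0, A i² + B i + C = 0, and s = b(1+ξi)/(μ + v_s i). -/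
/-!
The first equilibrium equation is linear in `s`: it says `s (μ + v_s i) = b (1 + ξ i)`.
Substituting this `s` into the second one and clearing the positive denominators
`(μ + v_s i)(ω + i)` leaves a quadratic in `i`, which is `A i² + B i + C` once `η₀` and `R₀`
are multiplied out (their denominators are `μ` and `μ V_i`).
-/

section ZhouFan

variable {K : Type*} [Field K] {b μ β ξ η ω v s i : K}

theorem susceptible_eq_zero_iff (hξi : 1 + ξ * i ≠ 0) (hD : μ + (β + ξ * μ) * i ≠ 0) :
    b - s * (μ + β * i / (1 + ξ * i)) = 0 ↔ s = b * (1 + ξ * i) / (μ + (β + ξ * μ) * i) := by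
  have hrate : μ + β * i / (1 + ξ * i) = (μ + (β + ξ * μ) * i) / (1 + ξ * i) := by
    rw [add_div' _ _ _ hξi]
    ring
  rw [hrate, sub_eq_zero, mul_div_assoc', eq_div_iff hξi, eq_div_iff hD, eq_comm]

theorem endemic_quadratic_eq (hμ : μ ≠ 0) (hV : v + η ≠ 0) :
    ((β + ξ * μ) * v) * i ^ 2 + ((v + η) * (β + ξ * μ) * ω - μ * (β * b / μ - v)) * i +
        ω * μ * (v + η) * (1 - β * b / (μ * (v + η))) =
      (β + ξ * μ) * v * i ^ 2 + ((v + η) * (β + ξ * μ) * ω - β * b + μ * v) * i +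
        ω * (μ * (v + η) - β * b) := by
  field_simp
  ring

theorem infective_rate_at_susceptible_eq (hξi : 1 + ξ * i ≠ 0)
    (hD : μ + (β + ξ * μ) * i ≠ 0) (hωi : ω + i ≠ 0) :
    b * (1 + ξ * i) / (μ + (β + ξ * μ) * i) * β / (1 + ξ * i) - η * ω / (ω + i) - v =
      -((β + ξ * μ) * v * i ^ 2 + ((v + η) * (β + ξ * μ) * ω - β * b + μ * v) * i +
          ω * (μ * (v + η) - β * b)) / ((μ + (β + ξ * μ) * i) * (ω + i)) := by
  have hinfection : b * (1 + ξ * i) / (μ + (β + ξ * μ) * i) * β / (1 + ξ * i) =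
      b * β / (μ + (β + ξ * μ) * i) := by
    rw [div_mul_eq_mul_div, div_div, mul_right_comm, mul_div_mul_right _ _ hξi]
  rw [hinfection, div_sub_div _ _ hD hωi, div_sub' (mul_ne_zero hD hωi)]
  ring

theorem infective_eq_zero_iff_endemic_quadratic (hξi : 1 + ξ * i ≠ 0)
    (hD : μ + (β + ξ * μ) * i ≠ 0) (hωi : ω + i ≠ 0) (hμ : μ ≠ 0) (hV : v + η ≠ 0) :
    b * (1 + ξ * i) / (μ + (β + ξ * μ) * i) * β / (1 + ξ * i) - η * ω / (ω + i) - v = 0 ↔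
      ((β + ξ * μ) * v) * i ^ 2 + ((v + η) * (β + ξ * μ) * ω - μ * (β * b / μ - v)) * i +
        ω * μ * (v + η) * (1 - β * b / (μ * (v + η))) = 0 := by
  rw [infective_rate_at_susceptible_eq hξi hD hωi, endemic_quadratic_eq hμ hV,
    div_eq_zero_iff, neg_eq_zero, or_iff_left (mul_ne_zero hD hωi)]

end ZhouFan

theorem endemic_quadratic_general (b μ β γ δ ξ η ω s i : ℝ)
    (hμ : 0 < μ) (hβ : 0 < β) (hγ : 0 < γ) (hδ : 0 < δ)
    (hξ : 0 < ξ) (hη : 0 < η) (hω : 0 < ω) :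
    (0 < i ∧ b - s * (μ + β * i / (1 + ξ * i)) = 0 ∧
      s * β / (1 + ξ * i) - η * ω / (ω + i) - (γ + μ + δ) = 0) ↔
    (0 < i ∧
      ((β + ξ * μ) * (γ + μ + δ)) * i ^ 2 +
        (((γ + μ + δ) + η) * (β + ξ * μ) * ω - μ * (β * b / μ - (γ + μ + δ))) * i +
        ω * μ * ((γ + μ + δ) + η) * (1 - β * b / (μ * ((γ + μ + δ) + η))) = 0 ∧
      s = b * (1 + ξ * i) / (μ + (β + ξ * μ) * i)) := by
  refine and_congr_right fun hi => ?_
  have hξi : 0 < 1 + ξ * i := by positivity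
  have hD : 0 < μ + (β + ξ * μ) * i := by positivity
  have hωi : 0 < ω + i := by positivity
  have hV : 0 < γ + μ + δ + η := by positivity
  rw [susceptible_eq_zero_iff hξi.ne' hD.ne', and_comm]
  refine and_congr_left fun hs => ?_
  subst hs
  exact infective_eq_zero_iff_endemic_quadratic hξi.ne' hD.ne' hωi.ne' hμ.ne' hV.ne'

/-- Endemic equilibria of the Zhou–Fan system correspond exactly to positive roots of
the quadratic `A i² + B i + C = 0`, together with `s = b(1+ξi)/(μ + v_s i)`. -/
theorem endemic_quadratic (b μ β γ δ ξ η ω s i : ℝ)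
    (hb : 0 < b) (hμ : 0 < μ) (hβ : 0 < β) (hγ : 0 < γ) (hδ : 0 < δ)
    (hξ : 0 < ξ) (hη : 0 < η) (hω : 0 < ω) :
    (0 < i ∧ b - s * (μ + β * i / (1 + ξ * i)) = 0 ∧
      s * β / (1 + ξ * i) - η * ω / (ω + i) - (γ + μ + δ) = 0) ↔
    (0 < i ∧
      ((β + ξ * μ) * (γ + μ + δ)) * i ^ 2 +
        (((γ + μ + δ) + η) * (β + ξ * μ) * ω - μ * (β * b / μ - (γ + μ + δ))) * i +
        ω * μ * ((γ + μ + δ) + η) * (1 - β * b / (μ * ((γ + μ + δ) + η))) = 0 ∧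
      s = b * (1 + ξ * i) / (μ + (β + ξ * μ) * i)) :=
  endemic_quadratic_general b μ β γ δ ξ η ω s i hμ hβ hγ hδ hξ hη hω
end

section
/- At any endemic equilibrium (s, i) of the Zhou–Fan two-dimensional system, eliminating s via the second stationarity equation s = (1+ξi)(ηω + v_i i + v_i ω)/(β(i+ω)), the determinant of the Jacobian equals det J = i/((1+ξi)(i+ω)²) · Ψ(i), where Ψ(i) = v_s v_i (i+ω)² + α(ω v_s - μ) and α = ηω. -/
/-! At an endemic equilibrium the second stationarity equation gives
`β s / (1 + ξ i) = η ω / (i + ω) + v_i`. Expanding the determinant, the two cross terms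
`± β i / (1 + ξ i) · β s / (1 + ξ i)²` cancel, so only `μ · β s / (1 + ξ i)²` carries `s`;
substituting the equilibrium value, the terms without a factor `i` cancel as well, leaving
`i · Ψ(i)` over the common denominator `(1 + ξ i)(i + ω)²`. -/

theorem det_zhouFan_jacobian {K : Type*} [Field K] (μ β γ δ ξ η ω s i : K) :
    Matrix.det
      !![-(β * i / (1 + ξ * i)) - μ, -(β * s / (1 + ξ * i) ^ 2);
         β * i / (1 + ξ * i),
         -(η * ω ^ 2 / (i + ω) ^ 2) + β * s / (1 + ξ * i) ^ 2 - (γ + μ + δ)] =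
    (β * i / (1 + ξ * i) + μ) * (η * ω ^ 2 / (i + ω) ^ 2 + (γ + μ + δ)) -
      μ * (β * s / (1 + ξ * i) ^ 2) := by
  rw [Matrix.det_fin_two_of]
  ring

theorem zhouFan_incidence_slope_of_endemic {K : Type*} [Field K] {β ξ η ω v s i : K}
    (hβ : β ≠ 0) (hξi : 1 + ξ * i ≠ 0) (hiω : i + ω ≠ 0)
    (hs : s = (1 + ξ * i) * (η * ω + v * i + v * ω) / (β * (i + ω))) :
    β * s / (1 + ξ * i) ^ 2 = (η * ω + v * (i + ω)) / ((1 + ξ * i) * (i + ω)) := by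
  subst hs
  field_simp
  ring

theorem det_jacobian_endemic_general (μ β γ δ ξ η ω s i : ℝ)
    (hβ : 0 < β)
    (hξ : 0 < ξ) (hω : 0 < ω) (hi : 0 < i)
    (hs : s = (1 + ξ * i) * (η * ω + (γ + μ + δ) * i + (γ + μ + δ) * ω) / (β * (i + ω))) :
    Matrix.det
      !![-(β * i / (1 + ξ * i)) - μ, -(β * s / (1 + ξ * i) ^ 2);
         β * i / (1 + ξ * i),
         -(η * ω ^ 2 / (i + ω) ^ 2) + β * s / (1 + ξ * i) ^ 2 - (γ + μ + δ)] =
    i / ((1 + ξ * i) * (i + ω) ^ 2) *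
      ((β + ξ * μ) * (γ + μ + δ) * (i + ω) ^ 2 + (η * ω) * (ω * (β + ξ * μ) - μ)) := by
  have hξi : 1 + ξ * i ≠ 0 := by positivity
  have hiω : i + ω ≠ 0 := by positivity
  rw [det_zhouFan_jacobian, zhouFan_incidence_slope_of_endemic hβ.ne' hξi hiω hs]
  field_simp
  ring

/-- At an endemic equilibrium of the Zhou–Fan system, eliminating `s` via the second
stationarity equation, the determinant of the Jacobian equals
`det J = i/((1+ξi)(i+ω)²) · Ψ(i)` with `Ψ(i) = v_s v_i (i+ω)² + α(ω v_s - μ)`, `α = ηω`. -/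
theorem det_jacobian_endemic (b μ β γ δ ξ η ω s i : ℝ)
    (hb : 0 < b) (hμ : 0 < μ) (hβ : 0 < β) (hγ : 0 < γ) (hδ : 0 < δ)
    (hξ : 0 < ξ) (hη : 0 < η) (hω : 0 < ω) (hi : 0 < i)
    (hs : s = (1 + ξ * i) * (η * ω + (γ + μ + δ) * i + (γ + μ + δ) * ω) / (β * (i + ω))) :
    Matrix.det
      !![-(β * i / (1 + ξ * i)) - μ, -(β * s / (1 + ξ * i) ^ 2);
         β * i / (1 + ξ * i),
         -(η * ω ^ 2 / (i + ω) ^ 2) + β * s / (1 + ξ * i) ^ 2 - (γ + μ + δ)] =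
    i / ((1 + ξ * i) * (i + ω) ^ 2) *
      ((β + ξ * μ) * (γ + μ + δ) * (i + ω) ^ 2 + (η * ω) * (ω * (β + ξ * μ) - μ)) :=
  det_jacobian_endemic_general μ β γ δ ξ η ω s i hβ hξ hω hi hs
end

section
/- At an endemic equilibrium of the Zhou–Fan system, the trace of the Jacobian equals Tr J = -b/s + ηωi/(i+ω)² - βξsi/(1+ξi)²; in particular, a sufficient condition for Tr J < 0 is ηωi/(i+ω)² ≤ βξsi/(1+ξi)². -/
/-!
At an equilibrium the susceptible equation gives `μ + βi/(1+ξi) = b/s` and the infective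
equation (after cancelling `i ≠ 0`) gives `γ + μ + δ = sβ/(1+ξi) - ηω/(ω+i)`. Substituting
these into the diagonal of the Jacobian and writing each saturated rate `c/d` as `c·d/d²`
leaves exactly the stated trace; since `b/s > 0`, the trace is negative as soon as the positive
term is dominated by the negative one.
-/

theorem div_sq_mul_self {G₀ : Type*} [GroupWithZero G₀] (a d : G₀) : a / d ^ 2 * d = a / d := by
  rcases eq_or_ne d 0 with rfl | hd
  · simp
  · rw [sq, div_mul_eq_div_div_swap, div_mul_cancel₀ _ hd]

namespace ZhouFan

variable {K : Type*} [Field K]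

theorem jacobian_ss_eq_of_equilibrium {b s μ f : K} (hs : s ≠ 0)
    (heq : b - s * (μ + f) = 0) : -f - μ = -(b / s) := by
  rw [sub_eq_zero.mp heq, mul_div_cancel_left₀ _ hs]
  ring

theorem jacobian_ii_eq_of_equilibrium {β ξ η ω m s i : K} (hi : i ≠ 0)
    (heq : i * (s * β / (1 + ξ * i) - η * ω / (ω + i) - m) = 0) :
    -(η * ω ^ 2 / (i + ω) ^ 2) + β * s / (1 + ξ * i) ^ 2 - m =
      η * ω * i / (i + ω) ^ 2 - β * ξ * s * i / (1 + ξ * i) ^ 2 := by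
  have hm : m = s * β / (1 + ξ * i) - η * ω / (ω + i) :=
    (sub_eq_zero.mp ((mul_eq_zero.mp heq).resolve_left hi)).symm
  have hinc : s * β / (1 + ξ * i) =
      β * s / (1 + ξ * i) ^ 2 + β * ξ * s * i / (1 + ξ * i) ^ 2 := by
    rw [← div_sq_mul_self (s * β) (1 + ξ * i)]
    ring
  have htreat : η * ω / (ω + i) = η * ω ^ 2 / (i + ω) ^ 2 + η * ω * i / (i + ω) ^ 2 := by
    rw [add_comm ω i, ← div_sq_mul_self (η * ω) (i + ω)]
    ring
  rw [hm, hinc, htreat]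
  ring

end ZhouFan

theorem trace_jacobian_endemic_general (b μ β γ δ ξ η ω s i : ℝ)
    (hb : 0 < b) (hs : 0 < s) (hi : 0 < i)
    (heq1 : b - s * (μ + β * i / (1 + ξ * i)) = 0)
    (heq2 : i * (s * β / (1 + ξ * i) - η * ω / (ω + i) - (γ + μ + δ)) = 0) :
    ((-(β * i / (1 + ξ * i)) - μ) +
      (-(η * ω ^ 2 / (i + ω) ^ 2) + β * s / (1 + ξ * i) ^ 2 - (γ + μ + δ)) =
      -(b / s) + η * ω * i / (i + ω) ^ 2 - β * ξ * s * i / (1 + ξ * i) ^ 2) ∧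
    (η * ω * i / (i + ω) ^ 2 ≤ β * ξ * s * i / (1 + ξ * i) ^ 2 →
      (-(β * i / (1 + ξ * i)) - μ) +
        (-(η * ω ^ 2 / (i + ω) ^ 2) + β * s / (1 + ξ * i) ^ 2 - (γ + μ + δ)) < 0) := by
  have htrace : (-(β * i / (1 + ξ * i)) - μ) +
      (-(η * ω ^ 2 / (i + ω) ^ 2) + β * s / (1 + ξ * i) ^ 2 - (γ + μ + δ)) =
      -(b / s) + η * ω * i / (i + ω) ^ 2 - β * ξ * s * i / (1 + ξ * i) ^ 2 := by
    rw [ZhouFan.jacobian_ss_eq_of_equilibrium hs.ne' heq1,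
      ZhouFan.jacobian_ii_eq_of_equilibrium hi.ne' heq2]
    ring
  refine ⟨htrace, fun hdom => ?_⟩
  rw [htrace]
  linarith [div_pos hb hs]

/-- At an endemic equilibrium of the Zhou–Fan system the trace of the Jacobian equals
`Tr J = -b/s + ηωi/(i+ω)² - βξsi/(1+ξi)²`; in particular `Tr J < 0` whenever
`ηωi/(i+ω)² ≤ βξsi/(1+ξi)²`. -/
theorem trace_jacobian_endemic (b μ β γ δ ξ η ω s i : ℝ)
    (hb : 0 < b) (hμ : 0 < μ) (hβ : 0 < β) (hγ : 0 < γ) (hδ : 0 < δ)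
    (hξ : 0 < ξ) (hη : 0 < η) (hω : 0 < ω) (hs : 0 < s) (hi : 0 < i)
    (heq1 : b - s * (μ + β * i / (1 + ξ * i)) = 0)
    (heq2 : i * (s * β / (1 + ξ * i) - η * ω / (ω + i) - (γ + μ + δ)) = 0) :
    ((-(β * i / (1 + ξ * i)) - μ) +
      (-(η * ω ^ 2 / (i + ω) ^ 2) + β * s / (1 + ξ * i) ^ 2 - (γ + μ + δ)) =
      -(b / s) + η * ω * i / (i + ω) ^ 2 - β * ξ * s * i / (1 + ξ * i) ^ 2) ∧
    (η * ω * i / (i + ω) ^ 2 ≤ β * ξ * s * i / (1 + ξ * i) ^ 2 →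
      (-(β * i / (1 + ξ * i)) - μ) +
        (-(η * ω ^ 2 / (i + ω) ^ 2) + β * s / (1 + ξ * i) ^ 2 - (γ + μ + δ)) < 0) :=
  trace_jacobian_endemic_general b μ β γ δ ξ η ω s i hb hs hi heq1 heq2
end
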